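/- arXiv:0710.4514 — 4 statements merged into one kernel-verified Lean document; each statement's English description precedes it below -/
import Mathlib

section
/- Let π be a group, G a profinite group (a compact Hausdorff totally disconnected topological group), ρ : π → G a group homomorphism with dense range, 𝔘 an ultrafilter on ℕ, and std : *π → G the standardization map (the unique group homomorphism such that for every sequence x : ℕ → π, ρ ∘ x converges to std(⟦x⟧) along 𝔘). Then the kernel of std equals the intersection ⋂ *(ρ⁻¹(U)), taken over all open normal subgroups U of G, of the subgroups *(ρ⁻¹(U)) of *π. -/
/-!
An element of a profinite group is trivial iff it lies in every open normal subgroup `U`. Open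
subgroups are clopen, so `std ⟦x⟧ ∈ U` iff `ρ (x i) ∈ U` for `𝔘`-almost every `i`, which is
exactly `⟦x⟧ ∈ *(ρ⁻¹ U)`.
-/

open Filter

/-- For a subgroup `H ≤ G`, the subgroup `*H` of the ultrapower `*G = Germ ↑𝔘 G`
consisting of germs admitting a representative all of whose values lie in `H`. -/
def starSubgroup (𝔘 : Ultrafilter ℕ) {G : Type*} [Group G] (H : Subgroup G) :
    Subgroup (Filter.Germ (𝔘 : Filter ℕ) G) where
  carrier := { x | ∃ f : ℕ → G, (∀ i, f i ∈ H) ∧ x = ↑f }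
  one_mem' := ⟨fun _ => 1, fun _ => H.one_mem, rfl⟩
  mul_mem' := by
    rintro x y ⟨f, hf, rfl⟩ ⟨g, hg, rfl⟩
    exact ⟨f * g, fun i => H.mul_mem (hf i) (hg i), (Filter.Germ.coe_mul f g).symm⟩
  inv_mem' := by
    rintro x ⟨f, hf, rfl⟩
    exact ⟨f⁻¹, fun i => H.inv_mem (hf i), (Filter.Germ.coe_inv f).symm⟩

theorem coe_mem_starSubgroup_iff {𝔘 : Ultrafilter ℕ} {G : Type*} [Group G] {H : Subgroup G}
    {f : ℕ → G} : (f : Germ (𝔘 : Filter ℕ) G) ∈ starSubgroup 𝔘 H ↔ ∀ᶠ i in 𝔘, f i ∈ H := by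
  classical
  constructor
  · rintro ⟨g, hg, hfg⟩
    exact (Germ.coe_eq.mp hfg.symm).mono fun i hi => hi ▸ hg i
  · intro hf
    refine ⟨fun i => if f i ∈ H then f i else 1, fun i => ?_, ?_⟩
    · dsimp only
      split_ifs with hi
      exacts [hi, H.one_mem]
    · exact Germ.coe_eq.mpr (hf.mono fun i hi => by simp [hi])

theorem IsClopen.mem_iff_eventually_mem_of_tendsto {X α : Type*} [TopologicalSpace X]
    {l : Filter α} [l.NeBot] {u : α → X} {a : X} {s : Set X} (hs : IsClopen s)
    (hu : Tendsto u l (nhds a)) : a ∈ s ↔ ∀ᶠ i in l, u i ∈ s :=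
  ⟨fun ha => hu (hs.isOpen.mem_nhds ha), hs.isClosed.mem_of_tendsto hu⟩

theorem eq_one_iff_forall_mem_openNormalSubgroup {G : Type*} [Group G] [TopologicalSpace G]
    [IsTopologicalGroup G] [CompactSpace G] [TotallyDisconnectedSpace G] {g : G} :
    g = 1 ↔ ∀ U : Subgroup G, U.Normal → IsOpen (U : Set G) → g ∈ U := by
  refine ⟨fun hg U _ _ => hg ▸ U.one_mem, fun h => ?_⟩
  by_contra hg
  obtain ⟨U, hU⟩ := ProfiniteGrp.exist_openNormalSubgroup_sub_open_nhds_of_one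
    isOpen_compl_singleton (Set.mem_compl_singleton_iff.mpr (Ne.symm hg))
  exact hU (h U.toSubgroup U.isNormal' U.isOpen') rfl

theorem ker_standardization_eq_iInf_general (π G : Type*) [Group π] [Group G]
    [TopologicalSpace G] [IsTopologicalGroup G] [CompactSpace G]
    [TotallyDisconnectedSpace G]
    (ρ : π →* G) (𝔘 : Ultrafilter ℕ)
    (std : Filter.Germ (𝔘 : Filter ℕ) π →* G)
    (hstd : ∀ x : ℕ → π, Filter.Tendsto (ρ ∘ x) (𝔘 : Filter ℕ) (nhds (std ↑x))) :
    std.ker =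
      ⨅ (U : Subgroup G) (_ : U.Normal) (_ : IsOpen (U : Set G)),
        starSubgroup 𝔘 (U.comap ρ) := by
  ext x
  induction x using Germ.inductionOn with
  | h f =>
    simp only [MonoidHom.mem_ker, Subgroup.mem_iInf, coe_mem_starSubgroup_iff,
      Subgroup.mem_comap, eq_one_iff_forall_mem_openNormalSubgroup]
    refine forall₂_congr fun U _ => forall_congr' fun hU => ?_
    exact IsClopen.mem_iff_eventually_mem_of_tendsto ⟨U.isClosed_of_isOpen hU, hU⟩ (hstd f)

/-- **The fundamental germ as a kernel.**  If `G` is a profinite group, `ρ : π → G` has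
dense range, and `std : *π → G` is the standardization map, then the kernel of `std`
equals the intersection `⋂ *(ρ⁻¹ U)` over all open normal subgroups `U ≤ G`. -/
theorem ker_standardization_eq_iInf (π G : Type*) [Group π] [Group G]
    [TopologicalSpace G] [IsTopologicalGroup G] [CompactSpace G] [T2Space G]
    [TotallyDisconnectedSpace G]
    (ρ : π →* G) (hρ : DenseRange ρ) (𝔘 : Ultrafilter ℕ)
    (std : Filter.Germ (𝔘 : Filter ℕ) π →* G)
    (hstd : ∀ x : ℕ → π, Filter.Tendsto (ρ ∘ x) (𝔘 : Filter ℕ) (nhds (std ↑x))) :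
    std.ker =
      ⨅ (U : Subgroup G) (_ : U.Normal) (_ : IsOpen (U : Set G)),
        starSubgroup 𝔘 (U.comap ρ) :=
  ker_standardization_eq_iInf_general π G ρ 𝔘 std hstd
end

section
/- Let 𝔘 be a nonprincipal ultrafilter on ℕ and F the free group on two generators. Then the subgroup N = ⋂ *H of the ultrapower *F, the intersection taken over all finite-index subgroups H of F, is nontrivial: there exists a germ x ∈ *F with x ≠ 1 such that x ∈ *H for every finite-index subgroup H ≤ F. (This shows the fundamental germ of the algebraic universal cover is nontrivial even though F is residually finite, i.e., even though the intersection of the finite-index subgroups of F themselves is trivial.) -/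
open Filter

/-- Powers of a generator of the free group are nontrivial for positive exponent. -/
lemma freeGroup_of_pow_ne_one (m : ℕ) (hm : m ≠ 0) :
    (FreeGroup.of (0 : Fin 2)) ^ m ≠ 1 := by
  intro h
  have h2 := congrArg (FreeGroup.lift fun _ : Fin 2 => Multiplicative.ofAdd (1 : ℤ)) h
  simp only [map_pow, FreeGroup.lift_apply_of, map_one] at h2
  have h3 := congrArg Multiplicative.toAdd h2
  simp [toAdd_pow] at h3
  exact hm h3

/-- For any subgroup of finite index, a sufficiently divisible power of any element
lies in the subgroup (via the normal core). -/
lemma pow_factorial_mem {G : Type*} [Group G] (H : Subgroup G) [H.FiniteIndex]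
    (g : G) (n : ℕ) (hn : H.normalCore.index ≤ n) : g ^ n.factorial ∈ H := by
  haveI : H.normalCore.FiniteIndex := Subgroup.finiteIndex_normalCore H
  obtain ⟨m, hm⟩ := Nat.dvd_factorial
    (Nat.pos_of_ne_zero Subgroup.FiniteIndex.index_ne_zero) hn
  rw [hm, pow_mul]
  exact H.normalCore_le (Subgroup.pow_mem _ (H.normalCore.pow_index_mem g) m)

/-- **Nontriviality of the fundamental germ of the algebraic universal cover.**
For a nonprincipal ultrafilter `𝔘` on `ℕ` and `F` the free group on two generators,
the intersection `N = ⋂ *H` over all finite-index subgroups `H ≤ F` is nontrivial. -/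
theorem fundGerm_nontrivial (𝔘 : Ultrafilter ℕ)
    (h𝔘 : (𝔘 : Filter ℕ) ≤ Filter.cofinite) :
    ∃ x : Filter.Germ (𝔘 : Filter ℕ) (FreeGroup (Fin 2)),
      x ≠ 1 ∧ ∀ H : Subgroup (FreeGroup (Fin 2)), H.FiniteIndex → x ∈ starSubgroup 𝔘 H := by
  set f : ℕ → FreeGroup (Fin 2) := fun n => (FreeGroup.of (0 : Fin 2)) ^ n.factorial with hf
  refine ⟨(f : Filter.Germ (𝔘 : Filter ℕ) (FreeGroup (Fin 2))), ?_, ?_⟩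
  · intro h
    have h1 : f =ᶠ[(𝔘 : Filter ℕ)] (fun _ => 1) := Filter.Germ.coe_eq.mp h
    obtain ⟨n, hn⟩ := h1.exists
    exact freeGroup_of_pow_ne_one n.factorial n.factorial_ne_zero hn
  · intro H hH
    set k := H.normalCore.index with hk
    refine ⟨fun n => if k ≤ n then f n else 1, fun n => ?_, ?_⟩
    · by_cases hkn : k ≤ n
      · simp only [if_pos hkn]
        exact pow_factorial_mem H _ n hkn
      · simp only [if_neg hkn]
        exact H.one_mem
    · apply (Filter.Germ.coe_eq).mpr
      have : {n | k ≤ n} ∈ (𝔘 : Filter ℕ) := by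
        apply h𝔘
        rw [Nat.cofinite_eq_atTop]
        exact Filter.eventually_atTop.mpr ⟨k, fun n hn => hn⟩
      filter_upwards [this] with n hn
      simp [if_pos hn]
end

section
/- Let 𝔘 be a nonprincipal ultrafilter on ℕ and F the free group on two generators. Then the ultrapower *F of F with respect to 𝔘 is not a free group in the discrete (combinatorial) sense: there is no set S such that *F is isomorphic as a group to the free group on S. -/
open Filter

/-- **`*F` is not a free group.**  For a nonprincipal ultrafilter `𝔘` on `ℕ` and `F` the
free group on two generators, the ultrapower `*F` is not isomorphic to the free group on
any set `S`. -/
theorem ultrapower_freeGroup_not_free (𝔘 : Ultrafilter ℕ)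
    (h𝔘 : (𝔘 : Filter ℕ) ≤ Filter.cofinite) (S : Type*) :
    IsEmpty (Filter.Germ (𝔘 : Filter ℕ) (FreeGroup (Fin 2)) ≃* FreeGroup S) := by
  constructor
  intro φ
  set a : FreeGroup (Fin 2) := FreeGroup.of 0 with ha
  -- the candidate divisible element and its roots, as germs
  set x : ℕ → Filter.Germ (𝔘 : Filter ℕ) (FreeGroup (Fin 2)) :=
    fun n => (↑(fun i : ℕ => a ^ (Nat.factorial i / n)) : Filter.Germ _ _) with hx
  -- roots: for n ≥ 1, (x n) ^ n = x 1
  have hroot : ∀ n : ℕ, 1 ≤ n → (x n) ^ n = x 1 := by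
    intro n hn
    rw [hx]
    simp only
    rw [← Filter.Germ.coe_pow]
    refine Filter.Germ.coe_eq.mpr ?_
    have hev : ∀ᶠ i in (cofinite : Filter ℕ), n ≤ i := by
      rw [Nat.cofinite_eq_atTop]; exact Filter.eventually_ge_atTop n
    refine (hev.filter_mono h𝔘).mono fun i hi => ?_
    show (a ^ (Nat.factorial i / n)) ^ n = a ^ (Nat.factorial i / 1)
    rw [← pow_mul, Nat.div_mul_cancel (Nat.dvd_factorial hn hi), Nat.div_one]
  -- powers of `a` are nontrivial
  have hapow : ∀ k : ℕ, 0 < k → a ^ k ≠ 1 := by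
    intro k hk hcontr
    have h2 : (FreeGroup.lift fun _ : Fin 2 => Multiplicative.ofAdd (1 : ℤ)) (a ^ k) = 1 := by
      rw [hcontr, map_one]
    rw [map_pow, ha, FreeGroup.lift_apply_of] at h2
    have h3 := congrArg Multiplicative.toAdd h2
    simp at h3
    omega
  -- x 1 ≠ 1
  have hx1 : x 1 ≠ 1 := by
    intro hcontr
    rw [hx] at hcontr
    simp only at hcontr
    rw [show (1 : Filter.Germ (𝔘 : Filter ℕ) (FreeGroup (Fin 2))) =
        (↑(fun _ : ℕ => (1 : FreeGroup (Fin 2))) : Filter.Germ _ _) from rfl,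
      Filter.Germ.coe_eq] at hcontr
    obtain ⟨i, hi⟩ := hcontr.exists
    exact hapow (Nat.factorial i / 1) (by rw [Nat.div_one]; exact Nat.factorial_pos i) hi
  -- the roots pairwise commute
  have hxcomm : ∀ n m : ℕ, x n * x m = x m * x n := by
    intro n m
    rw [hx]
    simp only [← Filter.Germ.coe_mul]
    refine Filter.Germ.coe_eq.mpr (Filter.Eventually.of_forall fun i => ?_)
    simp only [Pi.mul_apply]
    exact pow_mul_comm a _ _
  -- transport to the free group via φ
  set y : ℕ → FreeGroup S := fun n => φ (x n) with hy
  have hycomm : ∀ p ∈ Set.range y, ∀ q ∈ Set.range y, p * q = q * p := by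
    rintro _ ⟨n, rfl⟩ _ ⟨m, rfl⟩
    show φ (x n) * φ (x m) = φ (x m) * φ (x n)
    rw [← map_mul, ← map_mul, hxcomm n m]
  set H : Subgroup (FreeGroup S) := Subgroup.closure (Set.range y) with hH
  have hymem : ∀ n, y n ∈ H := fun n => Subgroup.subset_closure (Set.mem_range_self n)
  letI : CommGroup H := Subgroup.closureCommGroupOfComm hycomm
  have hHcomm : ∀ p q : H, p * q = q * p := fun p q => mul_comm p q
  -- H is a free group (Nielsen–Schreier)
  set B := IsFreeGroup.Generators H with hB
  set e : H ≃* FreeGroup B := IsFreeGroup.toFreeGroup (G := H) with he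
  -- hence FreeGroup B is commutative
  have hc : ∀ u v : FreeGroup B, u * v = v * u := by
    intro u v
    apply e.symm.injective
    rw [map_mul, map_mul, hHcomm]
  letI : CommGroup (FreeGroup B) :=
    { (inferInstance : Group (FreeGroup B)) with mul_comm := hc }
  -- the abelianization map into the free abelian group, with a retraction
  set f : FreeGroup B →* Multiplicative (B →₀ ℤ) :=
    FreeGroup.lift (fun b => Multiplicative.ofAdd (Finsupp.single b 1)) with hf
  set A : (B →₀ ℤ) →+ Additive (FreeGroup B) :=
    Finsupp.liftAddHom (fun b => zmultiplesHom _ (Additive.ofMul (FreeGroup.of b))) with hA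
  set g : Multiplicative (B →₀ ℤ) →* FreeGroup B := AddMonoidHom.toMultiplicativeLeft A with hg
  have hgf : ∀ u : FreeGroup B, g (f u) = u := by
    intro u
    have : g.comp f = MonoidHom.id (FreeGroup B) := by
      apply FreeGroup.ext_hom
      intro b
      show g (f (FreeGroup.of b)) = FreeGroup.of b
      rw [hf, FreeGroup.lift_apply_of, hg]
      show (A (Finsupp.single b 1)).toMul = FreeGroup.of b
      rw [hA, Finsupp.liftAddHom_apply_single, zmultiplesHom_apply, one_zsmul]
      rfl
    exact congrArg (fun ψ => ψ u) this
  -- transport the divisible element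
  have hy1 : y 1 ≠ 1 := by
    intro hcontr
    have h5 : φ (x 1) = 1 := hcontr
    exact hx1 (φ.injective (by rw [h5, map_one]))
  set h' : FreeGroup B := e ⟨y 1, hymem 1⟩ with hh'
  have hh'ne : h' ≠ 1 := by
    intro hcontr
    rw [hh'] at hcontr
    have := e.injective (by rw [hcontr, map_one] : e ⟨y 1, hymem 1⟩ = e 1)
    exact hy1 (congrArg Subtype.val this)
  have hfh' : f h' ≠ 1 := by
    intro hcontr
    have := hgf h'
    rw [hcontr, map_one] at this
    exact hh'ne this.symm
  set μ : B →₀ ℤ := Multiplicative.toAdd (f h') with hμ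
  have hμne : μ ≠ 0 := by
    intro hcontr
    apply hfh'
    have : f h' = Multiplicative.ofAdd μ := rfl
    rw [this, hcontr]; rfl
  obtain ⟨b, hb⟩ : ∃ b, μ b ≠ 0 := by
    by_contra hall
    push_neg at hall
    exact hμne (Finsupp.ext fun b => hall b)
  -- the contradiction: μ b is divisible by every n ≥ 1
  set n : ℕ := (μ b).natAbs + 1 with hn
  have hroot' : (e ⟨y n, hymem n⟩) ^ n = h' := by
    rw [hh', ← map_pow]
    congr 1
    ext
    show φ (x n) ^ n = φ (x 1)
    rw [← map_pow, hroot n (by omega)]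
  have hdvd : (n : ℤ) ∣ μ b := by
    have h4 := congrArg (fun u => (Multiplicative.toAdd (f u)) b) hroot'
    simp only [map_pow, toAdd_pow, Finsupp.smul_apply, ← hμ] at h4
    exact ⟨_, by rw [← h4, nsmul_eq_mul]⟩
  have hle : (n : ℤ) ≤ |μ b| := Int.le_of_dvd (abs_pos.mpr hb) ((dvd_abs _ _).mpr hdvd)
  rw [Int.abs_eq_natAbs] at hle
  omega
end

section
/- Let 𝔘 be an ultrafilter on ℕ and F the free group on two generators. The map sending a germ of a sequence of automorphisms (A i) of F to the map ⟦x⟧ ↦ ⟦fun i => A i (x i)⟧ is a well-defined injective group homomorphism from the ultrapower *Aut(F) of the automorphism group of F into the automorphism group of the ultrapower *F; moreover every automorphism of *F in its image maps the subgroup N = ⋂ *H (intersection over all finite-index subgroups H of F) onto N. (Thus the internal automorphisms *Aut(F) include canonically into °Aut(F), the automorphisms of *F stabilizing the fundamental germ.) -/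
open Filter

/-- `N = ⋂ *H`, the intersection over all finite-index subgroups `H` of the free group
`F` on two generators of the subgroups `*H ≤ *F`. -/
def fundGerm (𝔘 : Ultrafilter ℕ) : Subgroup (Filter.Germ (𝔘 : Filter ℕ) (FreeGroup (Fin 2))) :=
  ⨅ (H : Subgroup (FreeGroup (Fin 2))) (_ : H.FiniteIndex), starSubgroup 𝔘 H

namespace InternalAutAux

abbrev FF := FreeGroup (Fin 2)

/-- componentwise action -/
def act (𝔘 : Ultrafilter ℕ) (a : Germ (𝔘 : Filter ℕ) (MulAut FF))
    (x : Germ (𝔘 : Filter ℕ) FF) : Germ (𝔘 : Filter ℕ) FF :=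
  Germ.map₂ (fun A g => A g) a x

variable (𝔘 : Ultrafilter ℕ)

lemma act_coe (A : ℕ → MulAut FF) (f : ℕ → FF) :
    act 𝔘 (↑A) (↑f) = ↑(fun i => A i (f i)) := rfl

lemma act_mul (a : Germ (𝔘 : Filter ℕ) (MulAut FF)) (x y : Germ (𝔘 : Filter ℕ) FF) :
    act 𝔘 a (x * y) = act 𝔘 a x * act 𝔘 a y := by
  induction a using Germ.inductionOn with | h A =>
  induction x using Germ.inductionOn with | h f =>
  induction y using Germ.inductionOn with | h g =>
  change act 𝔘 (↑A) (↑(f * g)) = _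
  rw [act_coe, act_coe, act_coe, ← Germ.coe_mul]
  congr 1
  funext i
  exact map_mul (A i) (f i) (g i)

lemma act_comp (a b : Germ (𝔘 : Filter ℕ) (MulAut FF)) (x : Germ (𝔘 : Filter ℕ) FF) :
    act 𝔘 (a * b) x = act 𝔘 a (act 𝔘 b x) := by
  induction a using Germ.inductionOn with | h A =>
  induction b using Germ.inductionOn with | h B =>
  induction x using Germ.inductionOn with | h f =>
  change act 𝔘 (↑(A * B)) (↑f) = _
  rw [act_coe, act_coe, act_coe]; rfl

lemma act_one (x : Germ (𝔘 : Filter ℕ) FF) : act 𝔘 1 x = x := by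
  induction x using Germ.inductionOn with | h f =>
  change act 𝔘 (↑(1 : ℕ → MulAut FF)) (↑f) = ↑f
  rw [act_coe]; rfl

/-- the automorphism of the ultrapower -/
def toAut (a : Germ (𝔘 : Filter ℕ) (MulAut FF)) : MulAut (Germ (𝔘 : Filter ℕ) FF) where
  toFun := act 𝔘 a
  invFun := act 𝔘 a⁻¹
  left_inv x := by rw [← act_comp, inv_mul_cancel, act_one]
  right_inv x := by rw [← act_comp, mul_inv_cancel, act_one]
  map_mul' := act_mul 𝔘 a

/-- the homomorphism Φ -/
def Phi : Germ (𝔘 : Filter ℕ) (MulAut FF) →* MulAut (Germ (𝔘 : Filter ℕ) FF) where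
  toFun := toAut 𝔘
  map_one' := by ext x; exact act_one 𝔘 x
  map_mul' a b := by ext x; exact act_comp 𝔘 a b x

lemma Phi_coe (A : ℕ → MulAut FF) (f : ℕ → FF) :
    Phi 𝔘 (↑A) (↑f) = ↑(fun i => A i (f i)) := rfl

/-- conjugation of permutations as a hom -/
def permCongrHom {α β : Type*} (e : α ≃ β) : Equiv.Perm α →* Equiv.Perm β where
  toFun p := e.permCongr p
  map_one' := by ext x; simp
  map_mul' p q := by ext x; simp

/-- the intersection of the kernels of all homomorphisms `F → Perm (Fin n)` -/
def K (n : ℕ) : Subgroup FF :=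
  ⨅ φ : Fin 2 → Equiv.Perm (Fin n), (FreeGroup.lift φ).ker

instance K_finiteIndex (n : ℕ) : (K n).FiniteIndex :=
  Subgroup.finiteIndex_iInf fun _ => inferInstance

/-- every subgroup of index `n` contains `K n` -/
lemma K_le {n : ℕ} (H : Subgroup FF) [hH : H.FiniteIndex] (h : H.index = n) : K n ≤ H := by
  have hfin : Finite (FF ⧸ H) := H.finite_quotient_of_finiteIndex
  have hcard : Nat.card (FF ⧸ H) = n := h
  let e : (FF ⧸ H) ≃ Fin n := Finite.equivFinOfCardEq hcard
  let ψ : FF →* Equiv.Perm (Fin n) :=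
    (permCongrHom e).comp (MulAction.toPermHom FF (FF ⧸ H))
  have hker : ψ.ker ≤ H := by
    intro g hg
    have h1 : ψ g (e ((1 : FF) : FF ⧸ H)) = e ((1 : FF) : FF ⧸ H) := by
      rw [hg]; rfl
    have h2 : (g • ((1 : FF) : FF ⧸ H)) = ((1 : FF) : FF ⧸ H) := by
      have : e (g • ((1 : FF) : FF ⧸ H)) = e ((1 : FF) : FF ⧸ H) := by
        simpa [ψ, permCongrHom, MulAction.toPermHom] using h1
      exact e.injective this
    rw [MulAction.Quotient.smul_mk] at h2
    have := QuotientGroup.eq.mp h2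
    simpa using this
  have hlift : ψ = FreeGroup.lift (fun i => ψ (FreeGroup.of i)) := by
    apply FreeGroup.ext_hom
    intro i
    simp
  refine le_trans ?_ hker
  rw [hlift]
  exact iInf_le _ _

/-- `Φ a` maps `N` into `N` -/
lemma phi_mapsTo (a : Germ (𝔘 : Filter ℕ) (MulAut FF)) :
    ∀ x ∈ fundGerm 𝔘, (Phi 𝔘 a) x ∈ fundGerm 𝔘 := by
  induction a using Germ.inductionOn with | h A =>
  intro x hx
  rw [fundGerm, Subgroup.mem_iInf]
  intro H
  rw [Subgroup.mem_iInf]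
  intro hH
  have hx' : x ∈ starSubgroup 𝔘 (K H.index) := by
    have h1 := Subgroup.mem_iInf.mp hx (K H.index)
    exact Subgroup.mem_iInf.mp h1 (K_finiteIndex _)
  obtain ⟨f, hf, rfl⟩ := hx'
  refine ⟨fun i => A i (f i), fun i => ?_, (Phi_coe 𝔘 A f).symm⟩
  have hcom : (H.comap (A i).toMonoidHom).index = H.index :=
    Subgroup.index_comap_of_surjective _ (A i).surjective
  haveI : (H.comap (A i).toMonoidHom).FiniteIndex := ⟨hcom ▸ hH.index_ne_zero⟩
  have : f i ∈ H.comap (A i).toMonoidHom := K_le _ hcom (hf i)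
  exact this

end InternalAutAux

open InternalAutAux in
/-- **Internal automorphisms.**  The map sending a germ of automorphisms `(A i)` of the
free group `F` on two generators to `⟦x⟧ ↦ ⟦fun i => A i (x i)⟧` is a well-defined
injective group homomorphism `*Aut(F) → Aut(*F)`, and every automorphism of `*F` in its
image maps `N = ⋂ *H` onto itself. -/
theorem internal_automorphisms_include (𝔘 : Ultrafilter ℕ) :
    ∃ Φ : Filter.Germ (𝔘 : Filter ℕ) (MulAut (FreeGroup (Fin 2))) →*
          MulAut (Filter.Germ (𝔘 : Filter ℕ) (FreeGroup (Fin 2))),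
      Function.Injective Φ ∧
      (∀ (A : ℕ → MulAut (FreeGroup (Fin 2))) (x : ℕ → FreeGroup (Fin 2)),
        Φ ↑A ↑x = ↑(fun i => A i (x i))) ∧
      (∀ a : Filter.Germ (𝔘 : Filter ℕ) (MulAut (FreeGroup (Fin 2))),
        Subgroup.map (Φ a).toMonoidHom (fundGerm 𝔘) = fundGerm 𝔘) := by
  refine ⟨Phi 𝔘, ?_, fun A f => rfl, ?_⟩
  · rw [injective_iff_map_eq_one]
    intro a ha
    induction a using Germ.inductionOn with | h A =>
    have h1 : ∀ g : Fin 2, ∀ᶠ i in (𝔘 : Filter ℕ), A i (FreeGroup.of g) = FreeGroup.of g := by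
      intro g
      have h2 : Phi 𝔘 (↑A) (↑(fun _ : ℕ => FreeGroup.of g)) =
          (↑(fun _ : ℕ => FreeGroup.of g) : Germ (𝔘 : Filter ℕ) FF) := by
        rw [ha]; rfl
      rw [Phi_coe, Germ.coe_eq] at h2
      exact h2
    have h2 : ∀ᶠ i in (𝔘 : Filter ℕ), A i = 1 := by
      filter_upwards [h1 0, h1 1] with i hi0 hi1
      have hhom : (A i : FF →* FF) = MonoidHom.id FF := by
        apply FreeGroup.ext_hom
        intro g
        fin_cases g
        · exact hi0
        · exact hi1
      ext x
      exact DFunLike.congr_fun hhom x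
    rw [← Germ.coe_one, Germ.coe_eq]
    exact h2
  · intro a
    apply le_antisymm
    · rintro y ⟨x, hx, rfl⟩
      exact phi_mapsTo 𝔘 a x hx
    · intro y hy
      refine ⟨(Phi 𝔘 a⁻¹) y, phi_mapsTo 𝔘 a⁻¹ y hy, ?_⟩
      rw [map_inv]
      exact (Phi 𝔘 a).apply_symm_apply y
end
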